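/- arXiv:1711.04707 — 2 statements merged into one kernel-verified Lean document; each statement's English description precedes it below -/
import Mathlib

section
/- Let 0 < c < 1. There exist constants c₁, c₂ > 0 depending only on c such that for all even integers ℓ ≥ 2 and all even integers m with 0 ≤ m < cℓ, c₁ ≤ √( (2ℓ+1) · (ℓ−m)! / (ℓ+m)! ) · ( (ℓ−1)‼ / ℓ‼ ) · ( (ℓ+m)‼ / (ℓ−m)‼ ) ≤ c₂. -/
/-!
Write `ℓ = 2L`, `m = 2b` and let `W n = (2n)‼ / (2n-1)‼`. Splitting `(2k)! = (2k)‼ (2k-1)‼`,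
the square of the quantity becomes `(4L+1) / W(L)² · W(L+b) / W(L-b)`. The ratio
`W(n+1) / W(n) = (2n+2)/(2n+1)` gives `W` increasing and, by induction, `2n+1 ≤ W(n)² ≤ 4n+1`.
Hence the first factor lies in `[1, 2]` and the second in `[1, 2/(1-c)]`, since
`W(L+b)² / W(L-b)² ≤ (4(L+b)+1) / (2(L-b)+1)` and `L - b > (1-c) L`.
-/

open Nat Real

/-- `(2n)‼ / (2n-1)‼`, rewritten by `(2n)! = (2n)‼ (2n-1)‼` to avoid truncated subtraction. -/
noncomputable def wallisRatio (n : ℕ) : ℝ := ((2 * n)‼ : ℝ) ^ 2 / (2 * n)!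

lemma wallisRatio_zero : wallisRatio 0 = 1 := by simp [wallisRatio]

lemma wallisRatio_pos (n : ℕ) : 0 < wallisRatio n := by unfold wallisRatio; positivity

lemma wallisRatio_succ (n : ℕ) :
    wallisRatio (n + 1) = wallisRatio n * ((2 * n + 2) / (2 * n + 1)) := by
  have hd : (2 * (n + 1))‼ = (2 * n + 2) * (2 * n)‼ := doubleFactorial_add_two (2 * n)
  have hf : (2 * (n + 1))! = (2 * n + 2) * ((2 * n + 1) * (2 * n)!) := by
    rw [show 2 * (n + 1) = 2 * n + 1 + 1 by ring, factorial_succ, factorial_succ]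
  simp only [wallisRatio, hd, hf]
  push_cast
  field_simp

lemma monotone_wallisRatio : Monotone wallisRatio :=
  monotone_nat_of_le_succ fun n => by
    rw [wallisRatio_succ]
    exact le_mul_of_one_le_right (wallisRatio_pos n).le
      ((one_le_div (by positivity)).2 (by linarith))

lemma two_mul_add_one_le_sq_wallisRatio (n : ℕ) : 2 * n + 1 ≤ wallisRatio n ^ 2 := by
  induction n with
  | zero => simp [wallisRatio_zero]
  | succ n ih =>
    have h : (0 : ℝ) < 2 * n + 1 := by positivity
    calc (2 * (n + 1 : ℕ) + 1 : ℝ) ≤ (2 * n + 1) * ((2 * n + 2) / (2 * n + 1)) ^ 2 := by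
          push_cast; rw [div_pow, mul_div_assoc', le_div_iff₀ (by positivity)]; nlinarith
      _ ≤ wallisRatio (n + 1) ^ 2 := by
          rw [wallisRatio_succ, mul_pow]; gcongr

lemma sq_wallisRatio_le (n : ℕ) : wallisRatio n ^ 2 ≤ 4 * n + 1 := by
  induction n with
  | zero => simp [wallisRatio_zero]
  | succ n ih =>
    have h : (0 : ℝ) < 2 * n + 1 := by positivity
    calc wallisRatio (n + 1) ^ 2 ≤ (4 * n + 1) * ((2 * n + 2) / (2 * n + 1)) ^ 2 := by
          rw [wallisRatio_succ, mul_pow]; gcongr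
      _ ≤ 4 * ((n + 1 : ℕ) : ℝ) + 1 := by
          push_cast; rw [div_pow, mul_div_assoc', div_le_iff₀ (by positivity)]; nlinarith

lemma sq_wallisRatio_div_le (p s : ℕ) :
    (wallisRatio s / wallisRatio p) ^ 2 ≤ (4 * s + 1) / (2 * p + 1) := by
  rw [div_pow]
  exact div_le_div₀ (by positivity) (sq_wallisRatio_le s) (by positivity)
    (two_mul_add_one_le_sq_wallisRatio p)

noncomputable def equatorialModulus (ℓ m : ℕ) : ℝ :=
  Real.sqrt (((2 * ℓ + 1 : ℕ) : ℝ) * ((ℓ - m)! : ℝ) / ((ℓ + m)! : ℝ)) *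
    (((ℓ - 1)‼ : ℝ) / (ℓ‼ : ℝ)) * (((ℓ + m)‼ : ℝ) / ((ℓ - m)‼ : ℝ))

lemma doubleFactorial_two_mul_sub_one_div (n : ℕ) :
    ((2 * n - 1)‼ : ℝ) / (2 * n)‼ = 1 / wallisRatio n := by
  have : (2 * n)! = (2 * n)‼ * (2 * n - 1)‼ := by
    rcases n with _ | n
    · rfl
    · rw [show 2 * (n + 1) = 2 * n + 1 + 1 by ring, factorial_eq_mul_doubleFactorial]; rfl
  rw [wallisRatio, this]
  push_cast
  field_simp

lemma equatorialModulus_two_mul {L b : ℕ} (hb : b ≤ L) :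
    equatorialModulus (2 * L) (2 * b) =
      √((4 * L + 1) / wallisRatio L ^ 2 * (wallisRatio (L + b) / wallisRatio (L - b))) := by
  rw [equatorialModulus, show 2 * L - 2 * b = 2 * (L - b) by omega,
    show 2 * L + 2 * b = 2 * (L + b) by ring, doubleFactorial_two_mul_sub_one_div]
  have hWL := wallisRatio_pos L
  have hsq : (4 * L + 1) / wallisRatio L ^ 2 * (wallisRatio (L + b) / wallisRatio (L - b)) =
      ((2 * (2 * L) + 1 : ℕ) : ℝ) * (2 * (L - b))! / (2 * (L + b))! *
        (1 / wallisRatio L * ((2 * (L + b))‼ / (2 * (L - b))‼)) ^ 2 := by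
    simp only [wallisRatio]; push_cast; field_simp; ring
  rw [hsq, sqrt_mul (by positivity), sqrt_sq (by positivity), mul_assoc]

lemma one_le_equatorialModulus_two_mul {L b : ℕ} (hb : b ≤ L) :
    1 ≤ equatorialModulus (2 * L) (2 * b) := by
  rw [equatorialModulus_two_mul hb, one_le_sqrt]
  have hL : 1 ≤ (4 * L + 1) / wallisRatio L ^ 2 :=
    (one_le_div (by positivity [wallisRatio_pos L])).2 (by linarith [sq_wallisRatio_le L])
  have hR : 1 ≤ wallisRatio (L + b) / wallisRatio (L - b) :=
    (one_le_div (wallisRatio_pos _)).2 (monotone_wallisRatio (by omega))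
  nlinarith

lemma le_of_cast_lt_mul {c : ℝ} (hc : c < 1) {L b : ℕ} (hb : (b : ℝ) < c * L) : b ≤ L := by
  have hbL : (b : ℝ) ≤ L := by
    nlinarith [mul_nonneg (sub_nonneg.2 hc.le) (Nat.cast_nonneg (α := ℝ) L)]
  exact_mod_cast hbL

lemma wallisRatio_add_div_sub_le {c : ℝ} (hc : c < 1) {L b : ℕ} (hb : (b : ℝ) < c * L) :
    wallisRatio (L + b) / wallisRatio (L - b) ≤ 2 / (1 - c) := by
  have hbL : (b : ℝ) ≤ L := by exact_mod_cast le_of_cast_lt_mul hc hb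
  have hc0 : 0 < c := pos_of_mul_pos_left ((Nat.cast_nonneg b).trans_lt hb) (Nat.cast_nonneg L)
  have hc' : 0 < 1 - c := sub_pos.2 hc
  have hp : (1 - c) * (2 * L + 1) ≤ 2 * (L - b) + 1 := by nlinarith
  have hsq : (4 * (L + b : ℕ) + 1 : ℝ) / (2 * (L - b : ℕ) + 1) ≤ (2 / (1 - c)) ^ 2 := by
    rw [div_pow, div_le_div_iff₀ (by positivity) (by positivity)]
    push_cast [le_of_cast_lt_mul hc hb]
    calc (4 * (L + b) + 1 : ℝ) * (1 - c) ^ 2 ≤ 4 * ((1 - c) * (2 * L + 1)) * (1 - c) := by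
          nlinarith
      _ ≤ 4 * (2 * (L - b) + 1) * 1 := by gcongr; linarith
      _ = 2 ^ 2 * (2 * (L - b) + 1) := by ring
  exact (sq_le_sq₀ (div_nonneg (wallisRatio_pos _).le (wallisRatio_pos _).le)
    (by positivity)).1 ((sq_wallisRatio_div_le _ _).trans hsq)

lemma equatorialModulus_two_mul_le {c : ℝ} (hc : c < 1) {L b : ℕ} (hb : (b : ℝ) < c * L) :
    equatorialModulus (2 * L) (2 * b) ≤ 2 / √(1 - c) := by
  have hc' : 0 < 1 - c := sub_pos.2 hc
  have hA : (4 * L + 1) / wallisRatio L ^ 2 ≤ 2 :=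
    div_le_of_le_mul₀ (by positivity) zero_le_two
      (by linarith [two_mul_add_one_le_sq_wallisRatio L])
  have hR0 : 0 ≤ wallisRatio (L + b) / wallisRatio (L - b) :=
    div_nonneg (wallisRatio_pos _).le (wallisRatio_pos _).le
  rw [equatorialModulus_two_mul (le_of_cast_lt_mul hc hb), le_div_iff₀ (by positivity),
    ← sqrt_mul (by positivity), sqrt_le_left zero_le_two]
  calc (4 * L + 1) / wallisRatio L ^ 2 * (wallisRatio (L + b) / wallisRatio (L - b)) * (1 - c)
      ≤ 2 * (2 / (1 - c)) * (1 - c) :=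
        mul_le_mul_of_nonneg_right (mul_le_mul hA (wallisRatio_add_div_sub_le hc hb) hR0
          zero_le_two) hc'.le
    _ = 2 ^ 2 := by field_simp

theorem stmt_6_general (c : ℝ) (hc1 : c < 1) :
    ∃ c₁ c₂ : ℝ, 0 < c₁ ∧ 0 < c₂ ∧
      ∀ ℓ m : ℕ, Even ℓ → 2 ≤ ℓ → Even m → (m : ℝ) < c * ℓ →
        c₁ ≤ Real.sqrt (((2 * ℓ + 1 : ℕ) : ℝ) * ((ℓ - m)! : ℝ) / ((ℓ + m)! : ℝ)) *
              (((ℓ - 1)‼ : ℝ) / (ℓ‼ : ℝ)) * (((ℓ + m)‼ : ℝ) / ((ℓ - m)‼ : ℝ)) ∧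
        Real.sqrt (((2 * ℓ + 1 : ℕ) : ℝ) * ((ℓ - m)! : ℝ) / ((ℓ + m)! : ℝ)) *
              (((ℓ - 1)‼ : ℝ) / (ℓ‼ : ℝ)) * (((ℓ + m)‼ : ℝ) / ((ℓ - m)‼ : ℝ)) ≤ c₂ := by
  refine ⟨1, 2 / √(1 - c), one_pos, div_pos two_pos (sqrt_pos.2 (sub_pos.2 hc1)), ?_⟩
  rintro ℓ m ⟨L, rfl⟩ - ⟨b, rfl⟩ hm
  rw [← two_mul, ← two_mul] at *
  have hb : (b : ℝ) < c * L := by push_cast at hm; linarith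
  exact ⟨one_le_equatorialModulus_two_mul (le_of_cast_lt_mul hc1 hb),
    equatorialModulus_two_mul_le hc1 hb⟩

/-- For `0 < c < 1` there are constants `c₁, c₂ > 0` depending only on `c` such that for all
even `ℓ ≥ 2` and even `m` with `0 ≤ m < cℓ`,
`c₁ ≤ √((2ℓ+1)·(ℓ-m)!/(ℓ+m)!) · ((ℓ-1)‼/ℓ‼) · ((ℓ+m)‼/(ℓ-m)‼) ≤ c₂`. -/
theorem stmt_6 (c : ℝ) (hc0 : 0 < c) (hc1 : c < 1) :
    ∃ c₁ c₂ : ℝ, 0 < c₁ ∧ 0 < c₂ ∧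
      ∀ ℓ m : ℕ, Even ℓ → 2 ≤ ℓ → Even m → (m : ℝ) < c * ℓ →
        c₁ ≤ Real.sqrt (((2 * ℓ + 1 : ℕ) : ℝ) * ((ℓ - m)! : ℝ) / ((ℓ + m)! : ℝ)) *
              (((ℓ - 1)‼ : ℝ) / (ℓ‼ : ℝ)) * (((ℓ + m)‼ : ℝ) / ((ℓ - m)‼ : ℝ)) ∧
        Real.sqrt (((2 * ℓ + 1 : ℕ) : ℝ) * ((ℓ - m)! : ℝ) / ((ℓ + m)! : ℝ)) *
              (((ℓ - 1)‼ : ℝ) / (ℓ‼ : ℝ)) * (((ℓ + m)‼ : ℝ) / ((ℓ - m)‼ : ℝ)) ≤ c₂ :=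
  stmt_6_general c hc1
end

section
/- Let σ be the surface measure on the unit sphere S² ⊂ ℝ³, let N_k = ( ∫_{S²} (x₁² + x₂²)^k dσ )^{-1/2}, let Q_k(x) = N_k (x₁ + i x₂)^k, and let γ(s) = (cos s, sin s, 0) for s ∈ [0, 2π] be the equator parametrized by arc length. Then for every 1 ≤ p < ∞ and all integers k, m ≥ 1, ( ∫_0^{2π} |Q_k(γ(s)) Q_m(γ(s))|^p ds )^{1/p} = (2π)^{1/p} N_k N_m, and consequently there is a constant c > 0 such that ( ∫_0^{2π} |Q_k(γ(s)) Q_m(γ(s))|^p ds )^{1/p} ≥ c· k^{1/4} m^{1/4} for all k, m ≥ 1 and 1 ≤ p < ∞. -/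
/-!
On the equator `|x₁ + i x₂| = 1`, so `|Q_k Q_m| ≡ N_k N_m` along `γ` and the `L^p` norm is
computed exactly. The lower bound `N_k ≳ k^{1/4}` amounts to
`∫_{S²} (x₁² + x₂²)^k dμH² ≲ k^{-1/2}`: pulling the Hausdorff measure back along the
spherical-coordinate map, which is Lipschitz on its compact parameter box, bounds this integral
by a constant times
`∫_{-π/2}^{π/2} cos^{2k} ψ dψ ≤ ∫ exp (-4kψ²/π²) dψ = O(k^{-1/2})`
(Jordan's inequality `|sin ψ| ≥ 2|ψ|/π`). Since `N_k` is a negative power of the integral, its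
positivity is needed too; it comes from projecting a band of the sphere linearly onto a square
of positive area in the plane.
-/

open MeasureTheory Real Complex

/-- The normalizing constant `N_k` of the highest weight spherical harmonic on `S² ⊂ ℝ³`. -/
noncomputable def sphericalNormConst (k : ℕ) : ℝ :=
  (∫ x in Metric.sphere (0 : EuclideanSpace ℝ (Fin 3)) 1,
      ((x 0) ^ 2 + (x 1) ^ 2) ^ k ∂μH[2]) ^ (-(1 / 2 : ℝ))

/-- The `L²(S²)`-normalized highest weight spherical harmonic `Q_k(x) = N_k (x₁ + i x₂)^k`. -/
noncomputable def highestWeightSH (k : ℕ) (x : EuclideanSpace ℝ (Fin 3)) : ℂ :=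
  (sphericalNormConst k : ℂ) * ((x 0 : ℂ) + Complex.I * (x 1 : ℂ)) ^ k

/-- The equator of `S²`, parametrized by arc length. -/
noncomputable def equator (s : ℝ) : EuclideanSpace ℝ (Fin 3) :=
  WithLp.toLp 2 ![Real.cos s, Real.sin s, 0]

open Set
open scoped NNReal ENNReal

local notation "𝕊²" => Metric.sphere (0 : EuclideanSpace ℝ (Fin 3)) 1

-- `N_k = sphereMoment k ^ (-1/2)` holds definitionally.
noncomputable def sphereMoment (k : ℕ) : ℝ :=
  ∫ x in 𝕊², (x 0 ^ 2 + x 1 ^ 2) ^ k ∂μH[2]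

lemma sphereMoment_nonneg (k : ℕ) : 0 ≤ sphereMoment k :=
  setIntegral_nonneg Metric.isClosed_sphere.measurableSet fun _ _ => by positivity

lemma sphericalNormConst_nonneg (k : ℕ) : 0 ≤ sphericalNormConst k :=
  Real.rpow_nonneg (sphereMoment_nonneg k) _

lemma norm_highestWeightSH_equator (k : ℕ) (s : ℝ) :
    ‖highestWeightSH k (equator s)‖ = sphericalNormConst k := by
  have h : ((equator s 0 : ℝ) : ℂ) + I * (equator s 1 : ℝ) = Complex.exp (s * I) := by
    rw [Complex.exp_mul_I]
    simp [equator, mul_comm]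
  rw [highestWeightSH, norm_mul, norm_pow, h, Complex.norm_exp_ofReal_mul_I, one_pow, mul_one,
    Complex.norm_real, Real.norm_of_nonneg (sphericalNormConst_nonneg k)]

lemma integral_norm_highestWeightSH_mul_equator_rpow {p : ℝ} (hp : p ≠ 0) (k m : ℕ) :
    (∫ s in Icc (0 : ℝ) (2 * π),
        ‖highestWeightSH k (equator s) * highestWeightSH m (equator s)‖ ^ p) ^ (1 / p) =
      (2 * π) ^ (1 / p) * sphericalNormConst k * sphericalNormConst m := by
  have hN := mul_nonneg (sphericalNormConst_nonneg k) (sphericalNormConst_nonneg m)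
  simp_rw [norm_mul, norm_highestWeightSH_equator]
  rw [setIntegral_const, measureReal_def, Real.volume_Icc, sub_zero,
    ENNReal.toReal_ofReal (by positivity), smul_eq_mul,
    Real.mul_rpow (by positivity) (Real.rpow_nonneg hN _), ← Real.rpow_mul hN,
    mul_one_div_cancel hp, Real.rpow_one, mul_assoc]

section LipschitzImage

variable {ι X : Type*} [Fintype ι] [EMetricSpace X] [MeasurableSpace X] [BorelSpace X]

lemma restrict_hausdorffMeasure_le_smul_map {f : (ι → ℝ) → X} {K : ℝ≥0}
    {D : Set (ι → ℝ)} {t : Set X} (hf : LipschitzOnWith K f D) (hfm : Measurable f)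
    (ht : t ⊆ f '' D) :
    (μH[Fintype.card ι] : Measure X).restrict t ≤
      ((K : ℝ≥0∞) ^ (Fintype.card ι : ℝ)) • (volume.restrict D).map f := by
  refine Measure.le_iff.2 fun B hB => ?_
  rw [Measure.restrict_apply hB, Measure.smul_apply, Measure.map_apply hfm hB,
    Measure.restrict_apply (hfm hB), smul_eq_mul, ← hausdorffMeasure_pi_real]
  calc μH[Fintype.card ι] (B ∩ t) ≤ μH[Fintype.card ι] (f '' (f ⁻¹' B ∩ D)) := by
        refine measure_mono fun x ⟨hxB, hxt⟩ => ?_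
        obtain ⟨a, haD, rfl⟩ := ht hxt
        exact ⟨a, ⟨hxB, haD⟩, rfl⟩
    _ ≤ _ := (hf.mono inter_subset_right).hausdorffMeasure_image_le (Nat.cast_nonneg _)

lemma hausdorffMeasure_lt_top_of_subset_image {f : (ι → ℝ) → X} {K : ℝ≥0}
    {D : Set (ι → ℝ)} {t : Set X} (hf : LipschitzOnWith K f D) (hD : volume D < ∞)
    (ht : t ⊆ f '' D) :
    μH[Fintype.card ι] t < ∞ := by
  calc μH[Fintype.card ι] t ≤ μH[Fintype.card ι] (f '' D) := measure_mono ht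
    _ ≤ (K : ℝ≥0∞) ^ (Fintype.card ι : ℝ) * μH[Fintype.card ι] D :=
      hf.hausdorffMeasure_image_le (Nat.cast_nonneg _)
    _ < ∞ := by
      rw [hausdorffMeasure_pi_real]
      exact ENNReal.mul_lt_top (by finiteness) hD

lemma hausdorffMeasure_pos_of_lipschitzWith {f : X → (ι → ℝ)} {K : ℝ≥0} {s : Set X}
    (hf : LipschitzWith K f) (hs : 0 < volume (f '' s)) : 0 < μH[Fintype.card ι] s := by
  rw [← hausdorffMeasure_pi_real] at hs
  have := hf.hausdorffMeasure_image_le (Nat.cast_nonneg (Fintype.card ι)) s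
  exact pos_of_ne_zero fun h => hs.ne' (le_antisymm (by simpa [h] using this) bot_le)

end LipschitzImage

lemma mem_sphere_iff_sum_sq {x : EuclideanSpace ℝ (Fin 3)} :
    x ∈ 𝕊² ↔ x 0 ^ 2 + x 1 ^ 2 + x 2 ^ 2 = 1 := by
  rw [mem_sphere_zero_iff_norm, EuclideanSpace.norm_eq, Real.sqrt_eq_one, Fin.sum_univ_three]
  simp only [Real.norm_eq_abs, sq_abs]

noncomputable def sphericalCoords (a : Fin 2 → ℝ) : EuclideanSpace ℝ (Fin 3) :=
  WithLp.toLp 2 ![Real.cos (a 1) * Real.cos (a 0), Real.cos (a 1) * Real.sin (a 0), Real.sin (a 1)]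

def sphericalCoordsBox : Set (Fin 2 → ℝ) := Icc ![-π, -(π / 2)] ![π, π / 2]

lemma sphere_subset_image_sphericalCoords : 𝕊² ⊆ sphericalCoords '' sphericalCoordsBox := by
  intro x hx
  rw [mem_sphere_iff_sum_sq] at hx
  have hx2 : x 2 ∈ Icc (-1 : ℝ) 1 := by
    rw [mem_Icc, ← abs_le, ← sq_le_one_iff_abs_le_one]
    nlinarith [sq_nonneg (x 0), sq_nonneg (x 1)]
  set z : ℂ := x 0 + x 1 * I
  have hcos : Real.cos (Real.arcsin (x 2)) = ‖z‖ := by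
    rw [Real.cos_arcsin, Complex.norm_add_mul_I]
    congr 1
    linarith
  refine ⟨![arg z, Real.arcsin (x 2)], ⟨fun i => ?_, fun i => ?_⟩, ?_⟩
  · fin_cases i
    exacts [(neg_pi_lt_arg z).le, Real.neg_pi_div_two_le_arcsin _]
  · fin_cases i
    exacts [arg_le_pi z, Real.arcsin_le_pi_div_two _]
  · ext i
    fin_cases i <;> simp [sphericalCoords, hcos, norm_mul_cos_arg, norm_mul_sin_arg, z,
      Real.sin_arcsin' hx2]

lemma exists_lipschitzOnWith_sphericalCoords :
    ∃ K, LipschitzOnWith K sphericalCoords sphericalCoordsBox := by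
  have hC : ContDiff ℝ 1 sphericalCoords :=
    PiLp.contDiff_toLp.comp (contDiff_pi.2 fun i => by fin_cases i <;> simp <;> fun_prop)
  exact hC.locallyLipschitz.locallyLipschitzOn.exists_lipschitzOnWith_of_compact isCompact_Icc

lemma continuous_sphericalCoords : Continuous sphericalCoords := by
  unfold sphericalCoords; fun_prop

lemma hausdorffMeasure_sphere_lt_top : μH[2] 𝕊² < ∞ := by
  obtain ⟨K, hK⟩ := exists_lipschitzOnWith_sphericalCoords
  have hbox : volume sphericalCoordsBox < ∞ := by
    rw [sphericalCoordsBox, Real.volume_Icc_pi]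
    exact ENNReal.prod_lt_top fun _ _ => ENNReal.ofReal_lt_top
  simpa using hausdorffMeasure_lt_top_of_subset_image hK hbox sphere_subset_image_sphericalCoords

instance : IsFiniteMeasure ((μH[2] : Measure (EuclideanSpace ℝ (Fin 3))).restrict 𝕊²) :=
  isFiniteMeasure_restrict.2 hausdorffMeasure_sphere_lt_top.ne

lemma integrableOn_sphere_pow (k : ℕ) :
    IntegrableOn (fun x : EuclideanSpace ℝ (Fin 3) => (x 0 ^ 2 + x 1 ^ 2) ^ k) 𝕊² μH[2] := by
  refine Integrable.of_bound (by fun_prop) 1 ?_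
  filter_upwards [ae_restrict_mem Metric.isClosed_sphere.measurableSet] with x hx
  rw [mem_sphere_iff_sum_sq] at hx
  rw [Real.norm_of_nonneg (by positivity)]
  exact pow_le_one₀ (by positivity) (by nlinarith [sq_nonneg (x 2)])

noncomputable def planeProj : EuclideanSpace ℝ (Fin 3) →L[ℝ] (Fin 2 → ℝ) :=
  ContinuousLinearMap.pi fun i => EuclideanSpace.proj (Fin.castSucc i)

lemma Icc_subset_image_planeProj :
    Icc ![1 / 2, 0] ![3 / 4, 1 / 4] ⊆
      planeProj '' (𝕊² ∩ {x | 1 / 4 ≤ x 0 ^ 2 + x 1 ^ 2}) := by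
  intro u ⟨hlo, hhi⟩
  have h0 : 1 / 2 ≤ u 0 ∧ u 0 ≤ 3 / 4 := ⟨by simpa using hlo 0, by simpa using hhi 0⟩
  have h1 : 0 ≤ u 1 ∧ u 1 ≤ 1 / 4 := ⟨by simpa using hlo 1, by simpa using hhi 1⟩
  refine ⟨WithLp.toLp 2 ![u 0, u 1, √(1 - (u 0 ^ 2 + u 1 ^ 2))], ⟨?_, ?_⟩, ?_⟩
  · rw [mem_sphere_iff_sum_sq]
    simp only [Matrix.cons_val]
    rw [Real.sq_sqrt (by nlinarith)]
    ring
  · show 1 / 4 ≤ u 0 ^ 2 + u 1 ^ 2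
    nlinarith
  · ext i
    fin_cases i <;> simp [planeProj]

lemma sphereMoment_pos (k : ℕ) : 0 < sphereMoment k := by
  set A := 𝕊² ∩ {x : EuclideanSpace ℝ (Fin 3) | 1 / 4 ≤ x 0 ^ 2 + x 1 ^ 2}
  have hA : MeasurableSet A :=
    Metric.isClosed_sphere.measurableSet.inter (measurableSet_le (by fun_prop) (by fun_prop))
  have hAfin : μH[2] A < ∞ :=
    (measure_mono inter_subset_left).trans_lt hausdorffMeasure_sphere_lt_top
  have hApos : 0 < μH[2] A := by
    have hbox : 0 < volume (planeProj '' A) := by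
      refine lt_of_lt_of_le ?_ (measure_mono Icc_subset_image_planeProj)
      simp [Real.volume_Icc_pi, Fin.prod_univ_two]
      norm_num
    simpa using hausdorffMeasure_pos_of_lipschitzWith planeProj.lipschitz hbox
  calc 0 < μH[2].real A * (1 / 4 : ℝ) ^ k :=
        mul_pos (ENNReal.toReal_pos hApos.ne' hAfin.ne) (by positivity)
    _ = ∫ _ in A, (1 / 4 : ℝ) ^ k ∂μH[2] := by rw [setIntegral_const, smul_eq_mul]
    _ ≤ ∫ x in A, (x 0 ^ 2 + x 1 ^ 2) ^ k ∂μH[2] :=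
        setIntegral_mono_on (integrableOn_const hAfin.ne)
          ((integrableOn_sphere_pow k).mono_set inter_subset_left) hA
          fun x hx => pow_le_pow_left₀ (by norm_num) hx.2 k
    _ ≤ sphereMoment k :=
        setIntegral_mono_set (integrableOn_sphere_pow k) (ae_of_all _ fun _ => by positivity)
          inter_subset_left.eventuallyLE

lemma cos_pow_two_mul_le_exp {ψ : ℝ} (hψ : |ψ| ≤ π / 2) (k : ℕ) :
    Real.cos ψ ^ (2 * k) ≤ Real.exp (-(4 * k / π ^ 2) * ψ ^ 2) := by
  have hsin : (2 / π * |ψ|) ^ 2 ≤ Real.sin ψ ^ 2 := by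
    rw [← sq_abs (Real.sin ψ)]
    exact pow_le_pow_left₀ (by positivity) (Real.mul_abs_le_abs_sin hψ) 2
  calc Real.cos ψ ^ (2 * k) = (1 - Real.sin ψ ^ 2) ^ k := by rw [pow_mul, Real.cos_sq']
    _ ≤ Real.exp (-(2 / π * |ψ|) ^ 2) ^ k := by
        gcongr
        · nlinarith [Real.sin_sq_le_one ψ]
        · linarith [Real.add_one_le_exp (-(2 / π * |ψ|) ^ 2)]
    _ = Real.exp (-(4 * k / π ^ 2) * ψ ^ 2) := by
        rw [← Real.exp_nat_mul, mul_pow, sq_abs]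
        ring_nf

lemma integral_cos_pow_two_mul_le {k : ℕ} (hk : k ≠ 0) :
    ∫ t in Icc (-(π / 2)) (π / 2), Real.cos t ^ (2 * k) ≤
      √(π ^ 3 / 4) * (k : ℝ) ^ (-(1 / 2 : ℝ)) := by
  have hb : 0 < 4 * k / π ^ 2 := by positivity
  calc ∫ t in Icc (-(π / 2)) (π / 2), Real.cos t ^ (2 * k)
      ≤ ∫ t in Icc (-(π / 2)) (π / 2), Real.exp (-(4 * k / π ^ 2) * t ^ 2) :=
        setIntegral_mono_on (Real.continuous_cos.pow _).integrableOn_Icc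
          (integrable_exp_neg_mul_sq hb).integrableOn measurableSet_Icc
          fun t ht => cos_pow_two_mul_le_exp (abs_le.2 ht) k
    _ ≤ ∫ t, Real.exp (-(4 * k / π ^ 2) * t ^ 2) :=
        setIntegral_le_integral (integrable_exp_neg_mul_sq hb) (ae_of_all _ fun _ => by positivity)
    _ = √(π ^ 3 / 4) * (k : ℝ) ^ (-(1 / 2 : ℝ)) := by
        rw [integral_gaussian, Real.rpow_neg (Nat.cast_nonneg k), ← Real.sqrt_eq_rpow,
          ← Real.sqrt_inv, ← Real.sqrt_mul (by positivity)]
        congr 1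
        field_simp

lemma setIntegral_Icc_fin_two_comp_one (h : ℝ → ℝ) (a b c d : ℝ) :
    ∫ x in Icc ![a, c] ![b, d], h (x 1) = volume.real (Icc a b) * ∫ t in Icc c d, h t := by
  have hprod (x : Fin 2 → ℝ) : h (x 1) = ∏ i, ![fun _ => (1 : ℝ), h] i (x i) := by
    simp [Fin.prod_univ_two]
  simp_rw [hprod, ← pi_univ_Icc, volume_pi, Measure.restrict_pi_pi,
    integral_fintype_prod_eq_prod, Fin.prod_univ_two]
  simp

lemma sphereMoment_le :
    ∃ C, 0 ≤ C ∧
      ∀ k, sphereMoment k ≤ C * ∫ t in Icc (-(π / 2)) (π / 2), Real.cos t ^ (2 * k) := by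
  obtain ⟨K, hK⟩ := exists_lipschitzOnWith_sphericalCoords
  have hle := restrict_hausdorffMeasure_le_smul_map hK continuous_sphericalCoords.measurable
    sphere_subset_image_sphericalCoords
  simp only [Fintype.card_fin, Nat.cast_ofNat] at hle
  set c : ℝ≥0∞ := (K : ℝ≥0∞) ^ (2 : ℝ)
  set ν := (volume.restrict sphericalCoordsBox).map sphericalCoords
  refine ⟨c.toReal * volume.real (Icc (-π) π), by positivity, fun k => ?_⟩
  set g : EuclideanSpace ℝ (Fin 3) → ℝ := fun x => (x 0 ^ 2 + x 1 ^ 2) ^ k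
  have hg : Continuous g := by fun_prop
  have hgφ : ∀ a, g (sphericalCoords a) = Real.cos (a 1) ^ (2 * k) := fun a => by
    simp only [g, sphericalCoords, Matrix.cons_val_zero, Matrix.cons_val_one]
    rw [pow_mul, mul_pow, mul_pow, ← mul_add, Real.cos_sq_add_sin_sq, mul_one]
  have hgν : Integrable g ν :=
    (integrable_map_measure hg.aestronglyMeasurable continuous_sphericalCoords.aemeasurable).2
      ((hg.comp continuous_sphericalCoords).continuousOn.integrableOn_compact isCompact_Icc)
  calc sphereMoment k ≤ ∫ x, g x ∂(c • ν) :=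
        integral_mono_measure hle (ae_of_all _ fun _ => by positivity)
          (hgν.smul_measure (by finiteness))
    _ = _ := by
        rw [integral_smul_measure, integral_map continuous_sphericalCoords.aemeasurable
          hg.aestronglyMeasurable]
        simp_rw [hgφ]
        rw [sphericalCoordsBox, setIntegral_Icc_fin_two_comp_one (fun t => Real.cos t ^ (2 * k)),
          smul_eq_mul, mul_assoc]

lemma exists_pos_mul_rpow_le_sphericalNormConst :
    ∃ c, 0 < c ∧
      ∀ k : ℕ, 1 ≤ k → c * (k : ℝ) ^ (1 / 4 : ℝ) ≤ sphericalNormConst k := by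
  obtain ⟨C, hC, hle⟩ := sphereMoment_le
  have hbound (k : ℕ) (hk : 1 ≤ k) :
      sphereMoment k ≤ C * √(π ^ 3 / 4) * (k : ℝ) ^ (-(1 / 2 : ℝ)) :=
    (hle k).trans <| by
      rw [mul_assoc]
      exact mul_le_mul_of_nonneg_left (integral_cos_pow_two_mul_le (by omega)) hC
  have hC' : 0 < C * √(π ^ 3 / 4) := by
    simpa using (sphereMoment_pos 1).trans_le (hbound 1 le_rfl)
  refine ⟨(C * √(π ^ 3 / 4)) ^ (-(1 / 2 : ℝ)), by positivity, fun k hk => ?_⟩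
  calc (C * √(π ^ 3 / 4)) ^ (-(1 / 2 : ℝ)) * (k : ℝ) ^ (1 / 4 : ℝ)
      = (C * √(π ^ 3 / 4) * (k : ℝ) ^ (-(1 / 2 : ℝ))) ^ (-(1 / 2 : ℝ)) := by
        rw [Real.mul_rpow hC'.le (by positivity), ← Real.rpow_mul (Nat.cast_nonneg k)]
        norm_num
    _ ≤ sphericalNormConst k :=
        Real.rpow_le_rpow_of_nonpos (sphereMoment_pos k) (hbound k hk) (by norm_num)

/-- On the equator, the `L^p` norm of the product `Q_k Q_m` equals `(2π)^{1/p} N_k N_m`,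
and hence is bounded below by `c k^{1/4} m^{1/4}`. -/
theorem stmt_9 :
    (∀ p : ℝ, 1 ≤ p → ∀ k m : ℕ, 1 ≤ k → 1 ≤ m →
      (∫ s in Set.Icc (0 : ℝ) (2 * π),
          ‖highestWeightSH k (equator s) * highestWeightSH m (equator s)‖ ^ p) ^ (1 / p) =
        (2 * π) ^ (1 / p) * sphericalNormConst k * sphericalNormConst m) ∧
    ∃ c : ℝ, 0 < c ∧ ∀ p : ℝ, 1 ≤ p → ∀ k m : ℕ, 1 ≤ k → 1 ≤ m →
      c * (k : ℝ) ^ (1 / 4 : ℝ) * (m : ℝ) ^ (1 / 4 : ℝ) ≤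
        (∫ s in Set.Icc (0 : ℝ) (2 * π),
            ‖highestWeightSH k (equator s) * highestWeightSH m (equator s)‖ ^ p) ^ (1 / p) := by
  refine ⟨fun p hp k m _ _ =>
    integral_norm_highestWeightSH_mul_equator_rpow (zero_lt_one.trans_le hp).ne' k m, ?_⟩
  obtain ⟨c, hc, hN⟩ := exists_pos_mul_rpow_le_sphericalNormConst
  refine ⟨c * c, mul_pos hc hc, fun p hp k m hk hm => ?_⟩
  have h2π : 1 ≤ (2 * π) ^ (1 / p) :=
    Real.one_le_rpow (by linarith [Real.pi_gt_three]) (by positivity)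
  rw [integral_norm_highestWeightSH_mul_equator_rpow (zero_lt_one.trans_le hp).ne' k m]
  calc c * c * (k : ℝ) ^ (1 / 4 : ℝ) * (m : ℝ) ^ (1 / 4 : ℝ)
      = (c * (k : ℝ) ^ (1 / 4 : ℝ)) * (c * (m : ℝ) ^ (1 / 4 : ℝ)) := by ring
    _ ≤ sphericalNormConst k * sphericalNormConst m :=
        mul_le_mul (hN k hk) (hN m hm) (by positivity) (sphericalNormConst_nonneg k)
    _ ≤ (2 * π) ^ (1 / p) * sphericalNormConst k * sphericalNormConst m := by
        rw [mul_assoc]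
        exact le_mul_of_one_le_left
          (mul_nonneg (sphericalNormConst_nonneg k) (sphericalNormConst_nonneg m)) h2π
end
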